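/- Let G be a locally compact group with a strongly continuous action α of G on a complex Banach space A by linear isometric isomorphisms, and assume that for every a ∈ A and every continuous linear functional φ on A the matrix-coefficient function x ↦ φ(α_x(a)) belongs to C₀(G) (it is continuous and vanishes at infinity). Let a ∈ A be a nonzero vector. If there exists a neighborhood U of the identity e such that F_U(a) is finite dimensional, then G has a compact open subgroup H such that F_H(a) is finite dimensional. -/

import Mathlib

open Filter Topology

/-!
Let `V` be the (finite-dimensional) span of the orbit of `a` over the interior of `U`, and `H` the
subgroup of those `g` with `α g V = V`. Finitely many orbit points `α sᵢ a`, `sᵢ ∈ U`, span `V`, so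
every `g` close enough to `1` that all `g sᵢ` stay in `U` maps `V` into, hence onto, `V`: `H` is
open, thus also closed. The orbit of `a` over `H` lies in the sphere of radius `‖a‖` of `V`, which
is compact. If `H` were not compact, the orbit would have a cluster point on that sphere along
`cocompact G`, but the matrix coefficients make the orbit weakly null there, forcing the cluster
point to be `0`.
-/

namespace LinearIsometryEquiv

variable {R E : Type*} [Semiring R] [SeminormedAddCommGroup E] [Module R E]

def toLinearEquivHom : (E ≃ₗᵢ[R] E) →* (E ≃ₗ[R] E) where
  toFun e := e.toLinearEquiv
  map_one' := rfl
  map_mul' _ _ := rfl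

end LinearIsometryEquiv

namespace Submodule

section Semiring

variable {G K M : Type*} [Group G] [Semiring K] [AddCommGroup M] [Module K M]
  (ρ : G →* (M ≃ₗ[K] M))

theorem map_mul_eq_map_map (V : Submodule K M) (g h : G) :
    V.map (ρ (g * h) : M →ₗ[K] M) = (V.map (ρ h : M →ₗ[K] M)).map (ρ g : M →ₗ[K] M) := by
  rw [map_mul, LinearEquiv.coe_toLinearMap_mul, Module.End.mul_eq_comp, map_comp]

def stabilizer (V : Submodule K M) : Subgroup G where
  carrier := {g | V.map (ρ g : M →ₗ[K] M) = V}
  one_mem' := by simp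
  mul_mem' {g h} hg hh := by
    change V.map _ = V at hg hh ⊢
    rw [map_mul_eq_map_map, hh, hg]
  inv_mem' {g} hg := calc
    V.map (ρ g⁻¹ : M →ₗ[K] M) = (V.map (ρ g : M →ₗ[K] M)).map (ρ g⁻¹ : M →ₗ[K] M) := by rw [hg]
    _ = V := by
      rw [← map_mul_eq_map_map, inv_mul_cancel, map_one]
      exact map_id V

theorem span_image_orbit_le_of_mem {V : Submodule K M} {m : M} (hm : m ∈ V) :
    span K ((fun g => ρ g m) '' (stabilizer ρ V)) ≤ V :=
  span_le.2 <| by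
    rintro _ ⟨g, hg, rfl⟩
    exact hg ▸ mem_map_of_mem hm

end Semiring

section DivisionRing

variable {G K M : Type*} [Group G] [DivisionRing K] [AddCommGroup M] [Module K M]
  {ρ : G →* (M ≃ₗ[K] M)}

theorem mem_stabilizer_of_map_le {V : Submodule K M} [FiniteDimensional K V] {g : G}
    (h : V.map (ρ g : M →ₗ[K] M) ≤ V) : g ∈ stabilizer ρ V :=
  eq_of_le_of_finrank_le h (LinearEquiv.finrank_map_eq (ρ g) V).ge

theorem stabilizer_span_orbit_mem_nhds [TopologicalSpace G] [ContinuousMul G] (m : M)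
    {U : Set G} (hU : IsOpen U) [FiniteDimensional K (span K ((fun g => ρ g m) '' U))] :
    (stabilizer ρ (span K ((fun g => ρ g m) '' U)) : Set G) ∈ 𝓝 1 := by
  classical
  set f : G → M := fun g => ρ g m
  obtain ⟨S, hSU, hS⟩ : ∃ S : Finset G, ↑S ⊆ U ∧ span K (f '' U) = span K (f '' S) := by
    obtain ⟨s, hsU, hs⟩ :=
      (fg_span_iff_fg_span_finset_subset (f '' U)).1 (Module.Finite.iff_fg.1 ‹_›)
    obtain ⟨S, hSU, rfl⟩ := Finset.subset_set_image_iff.1 hsU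
    exact ⟨S, hSU, by rw [hs, Finset.coe_image]⟩
  have hW : ⋂ s ∈ S, (· * s) ⁻¹' U ∈ 𝓝 (1 : G) :=
    (Filter.biInter_finset_mem S).2 fun s hs =>
      (continuous_mul_const s).continuousAt.preimage_mem_nhds
        (by simpa using hU.mem_nhds (hSU hs))
  filter_upwards [hW] with g hg
  refine mem_stabilizer_of_map_le ?_
  conv_lhs => rw [hS, map_span, ← Set.image_comp]
  refine span_le.2 ?_
  rintro _ ⟨s, hs, rfl⟩
  refine subset_span ⟨g * s, Set.mem_iInter₂.1 hg s hs, ?_⟩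
  simp [f]

end DivisionRing

end Submodule

section WeaklyNull

variable {R E : Type*} [Ring R] [TopologicalSpace R] [T2Space R] [AddCommGroup E]
  [TopologicalSpace E] [Module R E] [SeparatingDual R E]

theorem ClusterPt.eq_zero_of_forall_tendsto_dual_zero {ι : Type*} {l : Filter ι} {f : ι → E}
    {v : E} (hv : ClusterPt v (Filter.map f l))
    (hf : ∀ φ : StrongDual R E, Tendsto (fun i => φ (f i)) l (𝓝 0)) : v = 0 :=
  SeparatingDual.eq_zero_of_forall_dual_eq_zero (R := R) fun φ =>
    eq_of_nhds_neBot (hv.map φ.continuous.continuousAt (tendsto_map'_iff.2 (hf φ)))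

theorem IsClosed.isCompact_of_cocompact_inf_principal_eq_bot {X : Type*} [TopologicalSpace X]
    {S : Set X} (hS : IsClosed S) (h : cocompact X ⊓ 𝓟 S = ⊥) : IsCompact S := by
  obtain ⟨K, hK, hKS⟩ := mem_cocompact.1 (inf_principal_eq_bot.1 h)
  exact hK.of_isClosed_subset hS (Set.compl_subset_compl.1 hKS)

theorem IsClosed.isCompact_of_mapsTo_of_forall_tendsto_dual_zero {X : Type*} [TopologicalSpace X]
    {S : Set X} (hS : IsClosed S) {f : X → E} {K : Set E} (hK : IsCompact K) (hK0 : (0 : E) ∉ K)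
    (hfK : Set.MapsTo f S K)
    (hf : ∀ φ : StrongDual R E, Tendsto (fun x => φ (f x)) (cocompact X) (𝓝 0)) :
    IsCompact S := by
  by_contra hS'
  have : NeBot (cocompact X ⊓ 𝓟 S) := ⟨mt hS.isCompact_of_cocompact_inf_principal_eq_bot hS'⟩
  obtain ⟨v, hvK, hv⟩ := hK.exists_clusterPt (f := map f (cocompact X ⊓ 𝓟 S))
    (le_principal_iff.2 (mem_inf_of_right hfK))
  exact hK0 (hv.eq_zero_of_forall_tendsto_dual_zero (fun φ => (hf φ).mono_left inf_le_left) ▸ hvK)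

end WeaklyNull

theorem span_orbit_finiteDimensional_compact_open_general
    {G A : Type*} [Group G] [TopologicalSpace G] [IsTopologicalGroup G]
    [NormedAddCommGroup A] [NormedSpace ℂ A]
    (α : G →* (A ≃ₗᵢ[ℂ] A))
    (hC0 : ∀ (b : A) (φ : A →L[ℂ] ℂ),
      Continuous (fun x : G => φ (α x b)) ∧
        Tendsto (fun x : G => φ (α x b)) (cocompact G) (𝓝 0))
    (a : A) (ha : a ≠ 0) (U : Set G) (hU : U ∈ 𝓝 (1 : G))
    (hfin : FiniteDimensional ℂ (Submodule.span ℂ ((fun x : G => α x a) '' U))) :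
    ∃ H : Subgroup G, IsCompact (H : Set G) ∧ IsOpen (H : Set G) ∧
      FiniteDimensional ℂ (Submodule.span ℂ ((fun x : G => α x a) '' (H : Set G))) := by
  let ρ := LinearIsometryEquiv.toLinearEquivHom.comp α
  set V := Submodule.span ℂ ((fun x : G => ρ x a) '' interior U)
  have : FiniteDimensional ℂ V :=
    Submodule.finiteDimensional_of_le (S₂ := Submodule.span ℂ ((fun x : G => α x a) '' U))
      (Submodule.span_mono (Set.image_mono interior_subset))
  have haV : a ∈ V := Submodule.subset_span ⟨1, mem_interior_iff_mem_nhds.2 hU, by simp⟩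
  set H := Submodule.stabilizer ρ V
  have hH_open : IsOpen (H : Set G) :=
    H.isOpen_of_mem_nhds (Submodule.stabilizer_span_orbit_mem_nhds a isOpen_interior)
  have hH_sphere : Set.MapsTo (fun x => α x a) H ((↑) '' Metric.sphere (0 : V) ‖a‖) :=
    fun x hx => ⟨⟨α x a, hx ▸ Submodule.mem_map_of_mem haV⟩, by simp, rfl⟩
  refine ⟨H, ?_, hH_open,
    Submodule.finiteDimensional_of_le (Submodule.span_image_orbit_le_of_mem ρ haV)⟩
  refine (H.isClosed_of_isOpen hH_open).isCompact_of_mapsTo_of_forall_tendsto_dual_zero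
    ((isCompact_sphere 0 ‖a‖).image continuous_subtype_val) ?_ hH_sphere fun φ => (hC0 a φ).2
  rintro ⟨w, hw, hw0⟩
  simp [(ZeroMemClass.coe_eq_zero).1 hw0, eq_comm, ha] at hw

/-- If `G` is a locally compact group acting strongly continuously by linear isometric
isomorphisms on a complex Banach space `A`, such that all matrix-coefficient functions
`x ↦ φ (α x a)` belong to `C₀(G)`, `a ≠ 0`, and the span of the orbit of `a` over some
neighborhood `U` of the identity is finite dimensional, then `G` has a compact open
subgroup `H` such that the span of the orbit of `a` over `H` is finite dimensional. -/
theorem span_orbit_finiteDimensional_compact_open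
    {G A : Type*} [Group G] [TopologicalSpace G] [IsTopologicalGroup G]
    [LocallyCompactSpace G] [T2Space G]
    [NormedAddCommGroup A] [NormedSpace ℂ A] [CompleteSpace A]
    (α : G →* (A ≃ₗᵢ[ℂ] A)) (hα : ∀ a : A, Continuous fun x : G => α x a)
    (hC0 : ∀ (b : A) (φ : A →L[ℂ] ℂ),
      Continuous (fun x : G => φ (α x b)) ∧
        Tendsto (fun x : G => φ (α x b)) (cocompact G) (𝓝 0))
    (a : A) (ha : a ≠ 0) (U : Set G) (hU : U ∈ 𝓝 (1 : G))
    (hfin : FiniteDimensional ℂ (Submodule.span ℂ ((fun x : G => α x a) '' U))) :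
    ∃ H : Subgroup G, IsCompact (H : Set G) ∧ IsOpen (H : Set G) ∧
      FiniteDimensional ℂ (Submodule.span ℂ ((fun x : G => α x a) '' (H : Set G))) :=
  span_orbit_finiteDimensional_compact_open_general α hC0 a ha U hU hfin
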